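/- arXiv:2010.10485 — 2 statements merged into one kernel-verified Lean document; each statement's English description precedes it below -/
import Mathlib

section
/- Let L be the free Lie algebra over a field k of characteristic zero on two generators x and y. If z ∈ L satisfies [z,x] = 0 and [z,y] = 0, then z = 0. In particular, the center of the free Lie algebra on two generators is trivial. -/
/-!
Let `φ : L → A` be the canonical map from the free Lie algebra to the free associative algebra.
If `z` commutes with both generators, so does `φ z`; in a free associative algebra on at least
two letters such an element `f` is a scalar (for `x ≠ y`, the coefficient of the word `y w` in `f`
is that of `y w x` in `f x = x f`, which is `0`), and the scalar is `0` because `φ z` has no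
constant term.

It remains to see that `φ` is injective in characteristic zero (Dynkin–Specht–Wever). The Dynkin
bracketing `δ (x₁ ⋯ xₙ) = ⁅x₁, ⁅x₂, …, xₙ⁆⁆` satisfies `δ (φ u * a) = ⁅u, δ a⁆ + ε(a) δ (φ u)`,
so `δ ∘ φ` is a derivation of `L` fixing the generators. Hence `L` is spanned by its eigenvectors
for the eigenvalues `1, 2, 3, …`, and `φ z = 0` puts `z` in the eigenspace for `0` as well.
-/

namespace MonoidAlgebra

variable {R X : Type*} [Semiring R]

theorem coeff_of_mul_eq_zero_of_commute {f : MonoidAlgebra R (FreeMonoid X)} {x y : X}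
    (hxy : x ≠ y) (hf : Commute f (single (FreeMonoid.of x) 1)) (w : FreeMonoid X) :
    f.coeff (FreeMonoid.of y * w) = 0 := by
  have hne : ∀ d, FreeMonoid.of x * d ≠ FreeMonoid.of y * w * FreeMonoid.of x := by
    intro d h
    have := congrArg FreeMonoid.toList h
    simp only [FreeMonoid.toList_mul, FreeMonoid.toList_of, List.cons_append,
      List.cons.injEq] at this
    exact hxy this.1
  calc f.coeff (FreeMonoid.of y * w)
      = (f * single (FreeMonoid.of x) 1).coeff (FreeMonoid.of y * w * FreeMonoid.of x) := by
        rw [coeff_mul_single_mul, mul_one]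
    _ = 0 := by rw [hf.eq, coeff_single_mul_of_forall_mul_ne _ _ hne]

theorem eq_single_one_of_commute [Nontrivial X] {f : MonoidAlgebra R (FreeMonoid X)}
    (hf : ∀ x, Commute f (single (FreeMonoid.of x) 1)) : f = single 1 (f.coeff 1) := by
  ext v
  induction v using FreeMonoid.casesOn with
  | one => simp
  | of_mul y w =>
    obtain ⟨x, hxy⟩ := exists_ne y
    rw [coeff_of_mul_eq_zero_of_commute hxy (hf x), coeff_single,
      Finsupp.single_eq_of_ne (by simp)]

end MonoidAlgebra

namespace FreeAlgebra

variable {R X : Type*} [CommSemiring R]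

theorem eq_algebraMap_of_commute_ι [Nontrivial X] {u : FreeAlgebra R X}
    (hu : ∀ x, Commute u (ι R x)) : u = algebraMap R _ (algebraMapInv u) := by
  let e := equivMonoidAlgebraFreeMonoid (R := R) (X := X)
  have he : ∀ x, e (ι R x) = MonoidAlgebra.single (FreeMonoid.of x) 1 := fun x => by
    simp [e, equivMonoidAlgebraFreeMonoid]
  have hc : e u = MonoidAlgebra.single 1 ((e u).coeff 1) :=
    MonoidAlgebra.eq_single_one_of_commute fun x => he x ▸ (hu x).map e
  obtain ⟨c, rfl⟩ : ∃ c, u = algebraMap R _ c :=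
    ⟨(e u).coeff 1, e.injective (hc.trans (e.commutes _).symm)⟩
  rw [AlgHom.commutes, Algebra.algebraMap_self_apply]

theorem basisFreeMonoid_apply (w : FreeMonoid X) :
    basisFreeMonoid R X w = FreeMonoid.lift (ι R) w := by
  rw [basisFreeMonoid]
  simp [equivMonoidAlgebraFreeMonoid]

end FreeAlgebra

namespace Module.End

variable {R L : Type*} [CommRing R] [LieRing L] [LieAlgebra R L]

theorem lie_mem_eigenspace_add {D : Module.End R L}
    (hD : ∀ u v, D ⁅u, v⁆ = ⁅D u, v⁆ + ⁅u, D v⁆) {μ ν : R} {u v : L}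
    (hu : u ∈ D.eigenspace μ) (hv : v ∈ D.eigenspace ν) : ⁅u, v⁆ ∈ D.eigenspace (μ + ν) := by
  rw [mem_eigenspace_iff] at hu hv ⊢
  rw [hD, hu, hv, smul_lie, lie_smul, add_smul]

theorem lie_mem_iSup_eigenspace_natCast_succ {D : Module.End R L}
    (hD : ∀ u v, D ⁅u, v⁆ = ⁅D u, v⁆ + ⁅u, D v⁆) {u v : L}
    (hu : u ∈ ⨆ n : ℕ, D.eigenspace ((n : R) + 1))
    (hv : v ∈ ⨆ n : ℕ, D.eigenspace ((n : R) + 1)) :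
    ⁅u, v⁆ ∈ ⨆ n : ℕ, D.eigenspace ((n : R) + 1) := by
  let B : L →ₗ[R] L →ₗ[R] L := LieModule.toEnd R L L
  refine (?_ : Submodule.map₂ B _ _ ≤ _) (Submodule.apply_mem_map₂ B hu hv)
  simp only [Submodule.map₂_iSup_left, Submodule.map₂_iSup_right, iSup_le_iff,
    Submodule.map₂_le]
  intro m n u hu v hv
  refine Submodule.mem_iSup_of_mem (m + n + 1) (?_ : ⁅u, v⁆ ∈ _)
  convert lie_mem_eigenspace_add hD hu hv using 2
  push_cast
  ring

end Module.End

noncomputable section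

namespace FreeLieAlgebra

open FreeAlgebra (ι algebraMapInv basisFreeMonoid)

variable (R : Type*) [CommRing R] {X : Type*}

attribute [local instance] LieRing.ofAssociativeRing

theorem lieSpan_range_of :
    LieSubalgebra.lieSpan R (FreeLieAlgebra R X) (Set.range (of R)) = ⊤ := by
  set S := LieSubalgebra.lieSpan R (FreeLieAlgebra R X) (Set.range (of R))
  let F : FreeLieAlgebra R X →ₗ⁅R⁆ S :=
    lift R fun x => ⟨of R x, LieSubalgebra.subset_lieSpan ⟨x, rfl⟩⟩
  have hF : S.incl.comp F = LieHom.id := hom_ext fun x => by simp [F]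
  refine eq_top_iff.mpr fun z _ => ?_
  rw [← LieHom.id_apply (R := R) z, ← hF]
  exact (F z).2

@[elab_as_elim]
theorem induction_on {p : FreeLieAlgebra R X → Prop} (z : FreeLieAlgebra R X)
    (of : ∀ x, p (of R x)) (zero : p 0) (add : ∀ u v, p u → p v → p (u + v))
    (smul : ∀ (c : R) u, p u → p (c • u)) (lie : ∀ u v, p u → p v → p ⁅u, v⁆) : p z := by
  have hz : z ∈ LieSubalgebra.lieSpan R (FreeLieAlgebra R X) (Set.range (FreeLieAlgebra.of R)) :=
    (lieSpan_range_of R).symm ▸ LieSubalgebra.mem_top z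
  induction hz using LieSubalgebra.lieSpan_induction with
  | mem _ h => obtain ⟨x, rfl⟩ := h; exact of x
  | zero => exact zero
  | add u v _ _ hu hv => exact add u v hu hv
  | smul c u _ hu => exact smul c u hu
  | lie u v _ _ hu hv => exact lie u v hu hv

def toFreeAlgebra : FreeLieAlgebra R X →ₗ⁅R⁆ FreeAlgebra R X := lift R (ι R)

@[simp]
theorem toFreeAlgebra_of (x : X) : toFreeAlgebra R (of R x) = ι R x :=
  lift_of_apply _ _

theorem toFreeAlgebra_lie (u v : FreeLieAlgebra R X) :
    toFreeAlgebra R ⁅u, v⁆ =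
      toFreeAlgebra R u * toFreeAlgebra R v - toFreeAlgebra R v * toFreeAlgebra R u :=
  LieHom.map_lie _ _ _

theorem commute_toFreeAlgebra_of_lie_eq_zero {u v : FreeLieAlgebra R X} (h : ⁅u, v⁆ = 0) :
    Commute (toFreeAlgebra R u) (toFreeAlgebra R v) :=
  sub_eq_zero.mp (by rw [← toFreeAlgebra_lie, h, map_zero])

@[simp]
theorem algebraMapInv_toFreeAlgebra (u : FreeLieAlgebra R X) :
    algebraMapInv (toFreeAlgebra R u) = 0 := by
  induction u using induction_on with
  | of x => simp [algebraMapInv]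
  | zero => simp
  | add u v hu hv => simp [hu, hv]
  | smul c u hu => simp [hu]
  | lie u v hu hv => simp [Ring.lie_def, hu, hv]

def lieWord : List X → FreeLieAlgebra R X
  | [] => 0
  | [x] => of R x
  | x :: y :: l => ⁅of R x, lieWord (y :: l)⁆

def dynkin : FreeAlgebra R X →ₗ[R] FreeLieAlgebra R X :=
  (basisFreeMonoid R X).constr R fun w => lieWord R w.toList

theorem dynkin_lift_ι (w : FreeMonoid X) :
    dynkin R (FreeMonoid.lift (ι R) w) = lieWord R w.toList := by
  rw [← FreeAlgebra.basisFreeMonoid_apply, dynkin, Module.Basis.constr_basis]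

@[simp]
theorem dynkin_one : dynkin R (1 : FreeAlgebra R X) = 0 := by
  simpa [lieWord] using dynkin_lift_ι R (1 : FreeMonoid X)

theorem dynkin_ι_mul (x : X) (a : FreeAlgebra R X) :
    dynkin R (ι R x * a) = ⁅of R x, dynkin R a⁆ + algebraMapInv a • of R x := by
  have : dynkin R ∘ₗ LinearMap.mulLeft R (ι R x) =
      LieModule.toEnd R _ _ (of R x) ∘ₗ dynkin R +
        algebraMapInv.toLinearMap.smulRight (of R x) := by
    refine (basisFreeMonoid R X).ext fun w => ?_
    simp only [LinearMap.comp_apply, LinearMap.mulLeft_apply, LinearMap.add_apply,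
      LinearMap.smulRight_apply, AlgHom.toLinearMap_apply, LieModule.toEnd_apply_apply,
      FreeAlgebra.basisFreeMonoid_apply]
    rw [← FreeMonoid.lift_eval_of (ι R) x, ← map_mul, dynkin_lift_ι, dynkin_lift_ι]
    induction w using FreeMonoid.casesOn with
    | one => simp [lieWord]
    | of_mul y w => simp [lieWord, algebraMapInv]
  exact LinearMap.congr_fun this a

@[simp]
theorem dynkin_ι (x : X) : dynkin R (ι R x) = of R x := by
  simpa using dynkin_ι_mul R x 1

theorem dynkin_toFreeAlgebra_mul (u : FreeLieAlgebra R X) (a : FreeAlgebra R X) :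
    dynkin R (toFreeAlgebra R u * a) =
      ⁅u, dynkin R a⁆ + algebraMapInv a • dynkin R (toFreeAlgebra R u) := by
  induction u using induction_on generalizing a with
  | of x => rw [toFreeAlgebra_of, dynkin_ι_mul, dynkin_ι]
  | zero => simp
  | add u v hu hv => simp only [map_add, add_mul, hu, hv, add_lie, smul_add]; abel
  | smul c u hu => simp only [map_smul, smul_mul_assoc, hu, smul_lie, smul_add, smul_comm c]
  | lie u v hu hv =>
    simp only [toFreeAlgebra_lie, sub_mul, mul_assoc, map_sub, hu, hv, map_mul,
      algebraMapInv_toFreeAlgebra, zero_mul, zero_smul, add_zero, lie_add, lie_smul, smul_sub,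
      lie_lie]
    abel

def euler : Module.End R (FreeLieAlgebra R X) :=
  dynkin R ∘ₗ (toFreeAlgebra R (X := X)).toLinearMap

theorem euler_apply (u : FreeLieAlgebra R X) : euler R u = dynkin R (toFreeAlgebra R u) := rfl

@[simp]
theorem euler_of (x : X) : euler R (of R x) = of R x := by
  rw [euler_apply, toFreeAlgebra_of, dynkin_ι]

theorem euler_lie (u v : FreeLieAlgebra R X) :
    euler R ⁅u, v⁆ = ⁅euler R u, v⁆ + ⁅u, euler R v⁆ := by
  simp only [euler_apply, toFreeAlgebra_lie, map_sub, dynkin_toFreeAlgebra_mul,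
    algebraMapInv_toFreeAlgebra, zero_smul, add_zero]
  rw [← lie_skew v]
  abel

theorem mem_iSup_eigenspace_euler (z : FreeLieAlgebra R X) :
    z ∈ ⨆ n : ℕ, (euler R).eigenspace ((n : R) + 1) := by
  induction z using induction_on with
  | of x =>
    refine Submodule.mem_iSup_of_mem 0 ?_
    simp
  | zero => exact zero_mem _
  | add u v hu hv => exact add_mem hu hv
  | smul c u hu => exact Submodule.smul_mem _ c hu
  | lie u v hu hv => exact Module.End.lie_mem_iSup_eigenspace_natCast_succ (euler_lie R) hu hv

theorem toFreeAlgebra_injective (k : Type*) [Field k] [CharZero k] :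
    Function.Injective (toFreeAlgebra k (X := X)) := by
  refine (injective_iff_map_eq_zero _).mpr fun z hz => ?_
  have h0 : z ∈ (euler k).eigenspace 0 := by
    rw [Module.End.mem_eigenspace_iff, euler_apply, hz, map_zero, zero_smul]
  have hpos : z ∈ ⨆ (μ : k) (_ : μ ≠ 0), (euler k).eigenspace μ := by
    refine (iSup_le fun n : ℕ => ?_ : _ ≤ ⨆ (μ : k) (_ : μ ≠ 0), (euler k).eigenspace μ)
      (mem_iSup_eigenspace_euler k z)
    exact le_iSup₂_of_le ((n : k) + 1) (Nat.cast_add_one_ne_zero n) le_rfl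
  simpa using (Module.End.eigenspaces_iSupIndep (euler k) 0).le_bot ⟨h0, hpos⟩

end FreeLieAlgebra

end

/-- In the free Lie algebra on two generators over a field of
characteristic zero, any element commuting with both generators is zero; in
particular the center of the free Lie algebra on two generators is trivial. -/
theorem stmt3 (k : Type*) [Field k] [CharZero k]
    (z : FreeLieAlgebra k (Fin 2))
    (hzx : ⁅z, FreeLieAlgebra.of k (0 : Fin 2)⁆ = 0)
    (hzy : ⁅z, FreeLieAlgebra.of k (1 : Fin 2)⁆ = 0) :
    z = 0 := by
  have hcomm : ∀ i : Fin 2,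
      Commute (FreeLieAlgebra.toFreeAlgebra k z) (FreeAlgebra.ι k i) := by
    intro i
    rw [← FreeLieAlgebra.toFreeAlgebra_of]
    fin_cases i
    exacts [FreeLieAlgebra.commute_toFreeAlgebra_of_lie_eq_zero k hzx,
      FreeLieAlgebra.commute_toFreeAlgebra_of_lie_eq_zero k hzy]
  refine FreeLieAlgebra.toFreeAlgebra_injective k ?_
  rw [map_zero, FreeAlgebra.eq_algebraMap_of_commute_ι hcomm,
    FreeLieAlgebra.algebraMapInv_toFreeAlgebra, map_zero]
end

section
/- For n ≥ 1 define wₙ = ∑_{l=1}^{n} (−1)^l ∑_{k₁+⋯+k_l=n, kᵢ≥1} (k_l + 1) ∏_{i=1}^{l} 1/(kᵢ+1)!. Then w₁ = −1 and wₙ = 0 for all n ≥ 2. Equivalently, in ℚ[[t]] one has ∑_{n≥1} wₙ tⁿ = −t. -/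
noncomputable def TT (l n : ℕ) : ℚ :=
  ∑ kk ∈ Finset.filter (fun kk : Fin (l + 1) → ℕ => ∀ i, 1 ≤ kk i)
      (Finset.Nat.antidiagonalTuple (l + 1) n),
    ((kk (Fin.last l) + 1 : ℕ) : ℚ) * ∏ i, ((kk i + 1).factorial : ℚ)⁻¹

lemma TT_zero (n : ℕ) (hn : 1 ≤ n) : TT 0 n = ((n.factorial : ℚ))⁻¹ := by
  unfold TT
  rw [Finset.Nat.antidiagonalTuple_one]
  rw [Finset.filter_singleton]
  simp only [Matrix.cons_val_fin_one, hn, if_pos, forall_const]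
  rw [Finset.sum_singleton]
  rw [Fin.prod_univ_one]
  simp only [Matrix.cons_val_fin_one, Nat.factorial_succ]
  push_cast
  rw [mul_inv, mul_inv_cancel_left₀]
  positivity

lemma TT_eq_zero_of_lt (l n : ℕ) (h : n < l + 1) : TT l n = 0 := by
  unfold TT
  apply Finset.sum_eq_zero
  intro kk hkk
  simp only [Finset.mem_filter, Finset.Nat.mem_antidiagonalTuple] at hkk
  exfalso
  have h1 : ∑ _i : Fin (l+1), 1 ≤ ∑ i, kk i := Finset.sum_le_sum fun i _ => hkk.2 i
  simp only [Finset.sum_const, Finset.card_univ, Fintype.card_fin, smul_eq_mul, mul_one] at h1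
  omega

lemma TT_rec (l n : ℕ) :
    TT (l + 1) n = ∑ a ∈ Finset.Icc 1 n, (((a + 1).factorial : ℚ))⁻¹ * TT l (n - a) := by
  unfold TT
  rw [Finset.sum_congr rfl (fun a _ => Finset.mul_sum _ _ _)]
  rw [Finset.sum_sigma']
  refine Finset.sum_nbij' (fun kk => ⟨kk 0, Fin.tail kk⟩) (fun p => Fin.cons p.1 p.2) ?_ ?_ ?_ ?_ ?_
  · intro kk hkk
    simp only [Finset.mem_filter, Finset.Nat.mem_antidiagonalTuple] at hkk
    have hsum : kk 0 + ∑ i : Fin (l+1), kk i.succ = n := by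
      rw [← Fin.sum_univ_succ]; exact hkk.1
    have h0 : 1 ≤ kk 0 := hkk.2 0
    simp only [Finset.mem_sigma, Finset.mem_Icc, Finset.mem_filter,
      Finset.Nat.mem_antidiagonalTuple]
    refine ⟨⟨h0, by omega⟩, ?_, fun i => hkk.2 i.succ⟩
    show ∑ i : Fin (l+1), kk i.succ = n - kk 0
    omega
  · intro p hp
    simp only [Finset.mem_sigma, Finset.mem_Icc, Finset.mem_filter,
      Finset.Nat.mem_antidiagonalTuple] at hp
    simp only [Finset.mem_filter, Finset.Nat.mem_antidiagonalTuple]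
    constructor
    · rw [Fin.sum_univ_succ]
      simp only [Fin.cons_zero, Fin.cons_succ]
      rw [hp.2.1]
      omega
    · intro i
      refine Fin.cases ?_ ?_ i
      · simpa using hp.1.1
      · intro j; simpa using hp.2.2 j
  · intro kk _; exact Fin.cons_self_tail kk
  · intro p _; simp [Fin.tail_cons]
  · intro kk hkk
    simp only [Fin.tail]
    rw [Fin.prod_univ_succ]
    have hlast : kk (Fin.last (l + 1)) = kk (Fin.last l).succ := by
      rw [Fin.succ_last]
    rw [hlast]
    ring




/-- The coefficient
`wₙ = ∑_{l=1}^{n} (−1)^l ∑_{k₁+⋯+k_l=n, kᵢ≥1} (k_l + 1) ∏_{i=1}^{l} 1/(kᵢ+1)!`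
(the outer sum is reindexed by `l ↦ l + 1` over `Finset.range n`, and `k_l` is the
last part of the composition). -/
noncomputable def wCoeff (n : ℕ) : ℚ :=
  ∑ l ∈ Finset.range n, (-1 : ℚ) ^ (l + 1) *
    ∑ kk ∈ Finset.filter (fun kk : Fin (l + 1) → ℕ => ∀ i, 1 ≤ kk i)
        (Finset.Nat.antidiagonalTuple (l + 1) n),
      ((kk (Fin.last l) + 1 : ℕ) : ℚ) * ∏ i, ((kk i + 1).factorial : ℚ)⁻¹

lemma w_def (n : ℕ) : wCoeff n = ∑ l ∈ Finset.range n, (-1 : ℚ) ^ (l + 1) * TT l n := rfl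

lemma w_zero : wCoeff 0 = 0 := by simp [w_def]

lemma w_trunc (m b : ℕ) (hb : b ≤ m) :
    ∑ l ∈ Finset.range m, (-1 : ℚ) ^ (l + 1) * TT l b = wCoeff b := by
  rw [w_def]
  symm
  apply Finset.sum_subset (Finset.range_subset_range.mpr hb)
  intro l _ hl
  rw [Finset.mem_range, not_lt] at hl
  rw [TT_eq_zero_of_lt l b (by omega), mul_zero]

lemma w_rec (m : ℕ) :
    wCoeff (m + 1) = -TT 0 (m + 1)
      - ∑ a ∈ Finset.Icc 1 (m + 1), (((a + 1).factorial : ℚ))⁻¹ * wCoeff (m + 1 - a) := by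
  rw [w_def, Finset.sum_range_succ']
  simp only [TT_rec]
  rw [Finset.sum_congr rfl (fun l _ => Finset.mul_sum _ _ _), Finset.sum_comm]
  have h : ∀ a ∈ Finset.Icc 1 (m + 1),
      ∑ l ∈ Finset.range m, (-1 : ℚ) ^ (l + 1 + 1) *
        ((((a + 1).factorial : ℚ))⁻¹ * TT l (m + 1 - a)) =
      -((((a + 1).factorial : ℚ))⁻¹ * wCoeff (m + 1 - a)) := by
    intro a ha
    rw [Finset.mem_Icc] at ha
    rw [← w_trunc m (m + 1 - a) (by omega), Finset.mul_sum, ← Finset.sum_neg_distrib]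
    apply Finset.sum_congr rfl
    intro l _
    ring
  rw [Finset.sum_congr rfl h, Finset.sum_neg_distrib]
  ring

lemma w_one : wCoeff 1 = -1 := by
  have h := w_rec 0
  simp only [Finset.Icc_self, Finset.sum_singleton] at h
  rw [h, TT_zero 1 le_rfl]
  norm_num [w_zero]

/-- `w₁ = −1` and `wₙ = 0` for all `n ≥ 2`; equivalently, in `ℚ[[t]]`
one has `∑_{n≥1} wₙ tⁿ = −t`. -/
theorem stmt6 : wCoeff 1 = -1 ∧ ∀ n : ℕ, 2 ≤ n → wCoeff n = 0 := by
  refine ⟨w_one, ?_⟩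
  intro n hn
  induction n using Nat.strong_induction_on with
  | _ n ih =>
    obtain ⟨m, rfl⟩ : ∃ m, n = m + 1 := ⟨n - 1, by omega⟩
    have hm : 1 ≤ m := by omega
    rw [w_rec m, TT_zero (m + 1) (by omega)]
    rw [Finset.sum_eq_single_of_mem m (by rw [Finset.mem_Icc]; omega)]
    · have : m + 1 - m = 1 := by omega
      rw [this, w_one]
      ring
    · intro a ha hne
      rw [Finset.mem_Icc] at ha
      rcases eq_or_lt_of_le ha.2 with h' | h'
      · rw [h']
        simp [w_zero]
      · have h2 : 2 ≤ m + 1 - a := by omega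
        rw [ih (m + 1 - a) (by omega) h2, mul_zero]
end
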